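/- arXiv:2605.30651 — 2 statements merged into one kernel-verified Lean document; each statement's English description precedes it below -/
import Mathlib

section
/- Let G be a positive semidefinite K×K real matrix and ℓ ∈ ℝᴷ have strictly positive entries. Then the maximum of ρ(q) = (qᵀGq)/(ℓᵀq) over the simplex Δᴷ equals max over k ∈ [K] of G_{kk}/ℓ_k. -/
/-!
Testing the quadratic form of a positive semidefinite `G` on `eᵢ - eⱼ` gives
`2 Gᵢⱼ ≤ Gᵢᵢ + Gⱼⱼ`, so for `q ≥ 0` with `∑ qᵢ = 1` we get `qᵀGq ≤ ∑ qᵢ Gᵢᵢ`. Each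
`Gᵢᵢ` is at most `M ℓᵢ` with `M = maxₖ Gₖₖ / ℓₖ`, hence `qᵀGq ≤ M ℓᵀq`, and the vertex `eₖ`
of a maximising `k` attains `M`.
-/

open Matrix

namespace Matrix.PosSemidef

variable {n : Type*} [Fintype n] {G : Matrix n n ℝ}

theorem two_mul_apply_le_add_diag (hG : G.PosSemidef) (i j : n) :
    2 * G i j ≤ G i i + G j j := by
  classical
  have hquad := hG.dotProduct_mulVec_nonneg (Pi.single i 1 - Pi.single j 1)
  have hsymm : G j i = G i j := by simpa using congrFun₂ hG.isHermitian i j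
  simp only [star_trivial, mulVec_sub, sub_dotProduct, dotProduct_sub, single_dotProduct,
    mulVec_single, MulOpposite.op_one, col_apply, one_smul, one_mul] at hquad
  linarith

theorem dotProduct_mulVec_le_sum_mul_sum_diag (hG : G.PosSemidef) {q : n → ℝ} (hq : 0 ≤ q) :
    q ⬝ᵥ G *ᵥ q ≤ (∑ i, q i) * ∑ i, q i * G i i := by
  have hpair (i j : n) : 2 * (q i * G i j * q j) ≤ q i * G i i * q j + q i * (q j * G j j) := by
    nlinarith [hG.two_mul_apply_le_add_diag i j, mul_nonneg (hq i) (hq j)]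
  have hexpand : q ⬝ᵥ G *ᵥ q = ∑ i, ∑ j, q i * G i j * q j := by
    simp only [dotProduct, mulVec, Finset.mul_sum, mul_assoc]
  have hsum : ∑ i, ∑ j, (q i * G i i * q j + q i * (q j * G j j)) =
      2 * ((∑ i, q i) * ∑ i, q i * G i i) := by
    simp only [Finset.sum_add_distrib, ← Finset.mul_sum, ← Finset.sum_mul]
    ring
  have := Finset.sum_le_sum fun i (_ : i ∈ Finset.univ) =>
    Finset.sum_le_sum fun j (_ : j ∈ Finset.univ) => hpair i j
  simp only [← Finset.mul_sum, hsum] at this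
  linarith

end Matrix.PosSemidef

section Weights

variable {n : Type*} [Fintype n] {ℓ q : n → ℝ}

theorem sum_mul_le_iSup_div_mul_dotProduct (hℓ : ∀ i, 0 < ℓ i) (hq : 0 ≤ q) (a : n → ℝ) :
    ∑ i, q i * a i ≤ (⨆ i, a i / ℓ i) * (ℓ ⬝ᵥ q) := by
  rw [dotProduct, Finset.mul_sum]
  refine Finset.sum_le_sum fun i _ => ?_
  have hle : a i ≤ (⨆ i, a i / ℓ i) * ℓ i :=
    (div_le_iff₀ (hℓ i)).mp (le_ciSup (f := fun i => a i / ℓ i) (Set.finite_range _).bddAbove i)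
  calc q i * a i ≤ q i * ((⨆ i, a i / ℓ i) * ℓ i) := mul_le_mul_of_nonneg_left hle (hq i)
    _ = (⨆ i, a i / ℓ i) * (ℓ i * q i) := by ring

theorem dotProduct_pos_of_mem_stdSimplex (hℓ : ∀ i, 0 < ℓ i) (hq : q ∈ stdSimplex ℝ n) :
    0 < ℓ ⬝ᵥ q := by
  obtain ⟨i, -, hi⟩ :=
    Finset.exists_lt_of_sum_lt (s := Finset.univ) (f := 0) (g := q) (by simp [hq.2])
  exact Finset.sum_pos' (fun j _ => mul_nonneg (hℓ j).le (hq.1 j))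
    ⟨i, Finset.mem_univ _, mul_pos (hℓ i) hi⟩

end Weights

/-- The maximum of `ρ(q) = qᵀGq / ℓᵀq` over the probability simplex equals
`max_k G_{kk}/ℓ_k`. -/
theorem rho_max_at_vertex (K : ℕ) (hK : 0 < K) (G : Matrix (Fin K) (Fin K) ℝ)
    (hG : G.PosSemidef) (ℓ : Fin K → ℝ) (hℓ : ∀ i, 0 < ℓ i) :
    IsGreatest ((fun q : Fin K → ℝ => (q ⬝ᵥ G.mulVec q) / (ℓ ⬝ᵥ q)) ''
        {q : Fin K → ℝ | (∀ i, 0 ≤ q i) ∧ ∑ i, q i = 1})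
      (⨆ k : Fin K, G k k / ℓ k) := by
  have : Nonempty (Fin K) := Fin.pos_iff_nonempty.mp hK
  obtain ⟨k, hk⟩ := exists_eq_ciSup_of_finite (f := fun k : Fin K => G k k / ℓ k)
  refine ⟨⟨Pi.single k 1, single_mem_stdSimplex ℝ k, ?_⟩, ?_⟩
  · simp [hk]
  · rintro _ ⟨q, hq, rfl⟩
    rw [div_le_iff₀ (dotProduct_pos_of_mem_stdSimplex hℓ hq)]
    calc q ⬝ᵥ G *ᵥ q ≤ (∑ i, q i) * ∑ i, q i * G i i :=
          hG.dotProduct_mulVec_le_sum_mul_sum_diag hq.1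
      _ = ∑ i, q i * G i i := by rw [hq.2, one_mul]
      _ ≤ _ := sum_mul_le_iSup_div_mul_dotProduct hℓ hq.1 _
end

section
/- Let ĝ₁ ≥ ĝ₂ ≥ … ≥ ĝ_K be reals, 1 ≤ B < K with ĝ_B > ĝ_{B+1}, and p the uniform distribution on [K]. Define τ = (1/K)·∑_{j=1}^{B}(ĝⱼ - ĝ_{B+1}). Then the vector q̂ with q̂ᵢ = (ĝᵢ - ĝ_{B+1})/∑_{j=1}^{B}(ĝⱼ - ĝ_{B+1}) for i ≤ B and q̂ᵢ = 0 for i > B is a probability vector in Δᴷ with support exactly {1,…,B}, and it maximizes F(q) = ∑ₖ ĝₖ(qₖ - pₖ) - (τ/2)·χ²(q‖p) over all q ∈ Δᴷ. -/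
/-!
`F` is a concave quadratic, so `q̂` maximizes it on the simplex as soon as it satisfies the KKT
conditions: the gradient `ĝₖ - Kτ (q̂ₖ - 1/K)` must equal a multiplier `μ` on the support of `q̂`
and be at most `μ` off it. For the margin-proportional weights the gradient is `ĝ_{B+1} + τ`
exactly on the top `B` indices and `ĝₖ + τ ≤ ĝ_{B+1} + τ` on the others, because the scores are
sorted.
-/

open Finset

variable {ι : Type*}

section QuadObjective

variable [Fintype ι]

noncomputable def quadObjective (g p : ι → ℝ) (c : ℝ) (x : ι → ℝ) : ℝ :=
  ∑ k, g k * (x k - p k) - c / 2 * ∑ k, (x k - p k) ^ 2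

lemma quadObjective_sub (g p : ι → ℝ) (c : ℝ) (x q : ι → ℝ) :
    quadObjective g p c x - quadObjective g p c q =
      ∑ k, (x k - q k) * (g k - c * (q k - p k)) - c / 2 * ∑ k, (x k - q k) ^ 2 := by
  simp only [quadObjective, mul_sum, ← sum_sub_distrib]
  exact sum_congr rfl fun k _ => by ring

theorem isMaxOn_quadObjective_of_kkt {g p q : ι → ℝ} {c : ℝ} (hc : 0 ≤ c)
    (hq : q ∈ stdSimplex ℝ ι) (μ : ℝ) (hle : ∀ k, g k - c * (q k - p k) ≤ μ)
    (heq : ∀ k, q k ≠ 0 → g k - c * (q k - p k) = μ) :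
    IsMaxOn (quadObjective g p c) (stdSimplex ℝ ι) q := by
  intro x ⟨hx_nonneg, hx_sum⟩
  set G := fun k => g k - c * (q k - p k)
  have hqG : ∑ k, q k * G k = μ := by
    calc ∑ k, q k * G k = ∑ k, q k * μ := sum_congr rfl fun k _ => by
            by_cases hk : q k = 0
            · simp [hk]
            · rw [show G k = μ from heq k hk]
      _ = μ := by rw [← sum_mul, hq.2, one_mul]
  have hxG : ∑ k, x k * G k ≤ μ := by
    calc ∑ k, x k * G k ≤ ∑ k, x k * μ :=
          sum_le_sum fun k _ => mul_le_mul_of_nonneg_left (hle k) (hx_nonneg k)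
      _ = μ := by rw [← sum_mul, hx_sum, one_mul]
  have hlin : ∑ k, (x k - q k) * G k = ∑ k, x k * G k - ∑ k, q k * G k := by
    simp only [sub_mul, sum_sub_distrib]
  have hquad : 0 ≤ c / 2 * ∑ k, (x k - q k) ^ 2 := by positivity
  have := quadObjective_sub g p c x q
  show quadObjective g p c x ≤ quadObjective g p c q
  linarith

end QuadObjective

section MarginWeights

variable {A : Finset ι} {g : ι → ℝ} {t : ℝ}

lemma sum_margin_pos (hA : ∀ i ∈ A, t < g i) (hne : A.Nonempty) :
    0 < ∑ j ∈ A, (g j - t) :=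
  sum_pos (fun i hi => sub_pos.2 (hA i hi)) hne

variable [DecidableEq ι]

noncomputable def marginWeights (A : Finset ι) (g : ι → ℝ) (t : ℝ) (i : ι) : ℝ :=
  if i ∈ A then (g i - t) / ∑ j ∈ A, (g j - t) else 0

lemma marginWeights_ne_zero_iff (hA : ∀ i ∈ A, t < g i) {i : ι} :
    marginWeights A g t i ≠ 0 ↔ i ∈ A := by
  unfold marginWeights
  split_ifs with hi
  · exact iff_of_true (div_pos (sub_pos.2 (hA i hi)) (sum_margin_pos hA ⟨i, hi⟩)).ne' hi
  · exact iff_of_false (not_not.2 rfl) hi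

variable [Fintype ι]

lemma marginWeights_mem_stdSimplex (hA : ∀ i ∈ A, t < g i) (hne : A.Nonempty) :
    marginWeights A g t ∈ stdSimplex ℝ ι := by
  have hS := sum_margin_pos hA hne
  refine ⟨fun i => ?_, ?_⟩
  · unfold marginWeights
    split_ifs with hi
    · exact div_nonneg (sub_pos.2 (hA i hi)).le hS.le
    · exact le_rfl
  · simp only [marginWeights, sum_ite_mem_eq, ← sum_div, div_self hS.ne']

theorem isMaxOn_marginWeights (hA : ∀ i ∈ A, t < g i) (hAc : ∀ i ∉ A, g i ≤ t)
    (hne : A.Nonempty) (p₀ : ℝ) :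
    IsMaxOn (quadObjective g (fun _ => p₀) (∑ j ∈ A, (g j - t))) (stdSimplex ℝ ι)
      (marginWeights A g t) := by
  set S := ∑ j ∈ A, (g j - t)
  have hS : 0 < S := sum_margin_pos hA hne
  have hgrad_mem : ∀ k ∈ A, g k - S * (marginWeights A g t k - p₀) = t + S * p₀ := by
    intro k hk
    rw [marginWeights, if_pos hk, mul_sub, mul_div_cancel₀ _ hS.ne']
    ring
  refine isMaxOn_quadObjective_of_kkt hS.le (marginWeights_mem_stdSimplex hA hne) (t + S * p₀)
    (fun k => ?_) (fun k hk => hgrad_mem k ((marginWeights_ne_zero_iff hA).1 hk))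
  by_cases hk : k ∈ A
  · exact (hgrad_mem k hk).le
  · rw [marginWeights, if_neg hk]
    linarith [hAc k hk]

end MarginWeights

/-- The `B`-parameterized closed form: with scores sorted decreasingly,
`ĝ_B > ĝ_{B+1}`, and `τ = (1/K)∑_{j≤B}(ĝ_j - ĝ_{B+1})`, the margin-proportional
weight vector `q̂` is a probability vector supported exactly on the top `B` indices,
and it maximizes `F(q) = ∑ₖ ĝₖ(qₖ - pₖ) - (τ/2)χ²(q‖p)` over the simplex. -/
theorem lark_closed_form (K B : ℕ) (g : Fin K → ℝ)
    (hsort : ∀ i j : Fin K, i ≤ j → g j ≤ g i)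
    (hB1 : 1 ≤ B) (hBK : B < K)
    (hgap : g ⟨B, hBK⟩ < g ⟨B - 1, Nat.lt_of_le_of_lt (Nat.sub_le B 1) hBK⟩)
    (S : ℝ)
    (hS : S = ∑ j ∈ Finset.univ.filter (fun j : Fin K => (j : ℕ) < B),
      (g j - g ⟨B, hBK⟩))
    (τ : ℝ) (hτ : τ = S / K)
    (qhat : Fin K → ℝ)
    (hqhat : ∀ i : Fin K,
      qhat i = if (i : ℕ) < B then (g i - g ⟨B, hBK⟩) / S else 0)
    (F : (Fin K → ℝ) → ℝ)
    (hF : ∀ x : Fin K → ℝ,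
      F x = (∑ k, g k * (x k - 1 / K)) -
        (τ / 2) * ∑ k, (x k - 1 / K) ^ 2 / (1 / K)) :
    (∀ i, 0 ≤ qhat i) ∧ (∑ i, qhat i = 1) ∧
      (∀ i : Fin K, qhat i ≠ 0 ↔ (i : ℕ) < B) ∧
      (∀ x : Fin K → ℝ, (∀ i, 0 ≤ x i) → ∑ i, x i = 1 → F x ≤ F qhat) := by
  set A := univ.filter (fun j : Fin K => (j : ℕ) < B)
  have hmem : ∀ i, i ∈ A ↔ (i : ℕ) < B := by simp [A]
  have hA : ∀ i ∈ A, g ⟨B, hBK⟩ < g i := fun i hi =>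
    hgap.trans_le (hsort _ _ (Nat.le_sub_one_of_lt ((hmem i).1 hi)))
  have hAc : ∀ i ∉ A, g i ≤ g ⟨B, hBK⟩ := fun i hi =>
    hsort _ _ (not_lt.1 ((hmem i).not.1 hi))
  have hne : A.Nonempty := ⟨_, (hmem ⟨B - 1, by omega⟩).2 (Nat.sub_one_lt_of_lt hB1)⟩
  have hq : qhat = marginWeights A g (g ⟨B, hBK⟩) := funext fun i => by
    simp only [hqhat, marginWeights, hmem, hS]
  have hK : (K : ℝ) ≠ 0 := Nat.cast_ne_zero.2 (by omega)
  have hFq : F = quadObjective g (fun _ => 1 / K) S := funext fun x => by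
    rw [hF, hτ, quadObjective]
    simp only [div_div_eq_mul_div, div_one, ← sum_mul]
    congr 1
    generalize ∑ k, (x k - 1 / (K : ℝ)) ^ 2 = Q
    field_simp
  obtain ⟨hnn, hsum⟩ := marginWeights_mem_stdSimplex hA hne
  subst hq hFq hS
  exact ⟨hnn, hsum, fun i => (marginWeights_ne_zero_iff hA).trans (hmem i),
    fun x hx hxs => isMaxOn_marginWeights hA hAc hne _ ⟨hx, hxs⟩⟩
end
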